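/- arXiv:1409.8250 — 5 statements merged into one kernel-verified Lean document; each statement's English description precedes it below -/
import Mathlib

section
/- If B_s is a primitive s-form with s < n on a symplectic manifold of dimension 2n, then dB_s = B_{s+1} + L B_{s-1} for some primitive forms B_{s+1} ∈ P^{s+1}, B_{s-1} ∈ P^{s-1}; if s = n then dB_n = L B_{n-1} for some primitive B_{n-1} ∈ P^{n-1}. Consequently d maps L^{r,s} into L^{r,s+1} ⊕ L^{r+1,s-1}. -/
/-!
`d B` has degree `s + 1` and is killed by `L ^ (n - s + 1)`, since `d` commutes with `L` and
`L ^ (n - s + 1)` already kills the primitive `s`-form `B`. Everything then follows from the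
`sl₂` identity `Λ L^(j+1) x = L^(j+1) Λ x + (j+1)(n - t - j) L^j x` for `x` of degree `t`:
pushing the bound through `Λ` twice shows `L ^ (n - s + 3)` kills the `(s - 3)`-form `Λ² (d B)`,
so `Λ² (d B) = 0` by injectivity of `L ^ (n - s + 3)` in that degree. Hence
`B₂ = Λ (d B) / (n - s + 1)` is primitive, and so is `B₁ = d B - L B₂`.
-/

open Finset

section Grading

variable {V : Type*} [AddCommGroup V] [Module ℝ V] {n : ℕ} {Prj : ℤ → Module.End ℝ V}

lemma eq_zero_of_proj_apply_of_notMem (sum_proj : ∑ k ∈ Icc (0 : ℤ) (2 * n), Prj k = 1)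
    (proj_mul_proj : ∀ j k : ℤ, j ≠ k → Prj j * Prj k = 0) {t : ℤ} (ht : t ∉ Icc (0 : ℤ) (2 * n))
    {x : V} (hx : Prj t x = x) : x = 0 := by
  have hk : ∀ k ∈ Icc (0 : ℤ) (2 * n), Prj k x = 0 := fun k hk => by
    rw [← hx, ← Module.End.mul_apply, proj_mul_proj k t (ne_of_mem_of_not_mem hk ht),
      LinearMap.zero_apply]
  calc x = (∑ k ∈ Icc (0 : ℤ) (2 * n), Prj k) x := by rw [sum_proj, Module.End.one_apply]
    _ = 0 := by rw [LinearMap.sum_apply, sum_eq_zero hk]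

lemma sum_sub_smul_proj_apply (sum_proj : ∑ k ∈ Icc (0 : ℤ) (2 * n), Prj k = 1)
    (proj_mul_proj : ∀ j k : ℤ, j ≠ k → Prj j * Prj k = 0) {t : ℤ} {x : V} (hx : Prj t x = x) :
    (∑ k ∈ Icc (0 : ℤ) (2 * n), ((n : ℤ) - k) • Prj k) x = ((n : ℝ) - t) • x := by
  by_cases ht : t ∈ Icc (0 : ℤ) (2 * n)
  · rw [LinearMap.sum_apply, sum_eq_single_of_mem t ht, LinearMap.smul_apply, hx,
      ← Int.cast_smul_eq_zsmul ℝ]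
    · push_cast; rfl
    · intro k _ hkt
      rw [LinearMap.smul_apply, ← hx, ← Module.End.mul_apply, proj_mul_proj k t hkt,
        LinearMap.zero_apply, smul_zero]
  · simp [eq_zero_of_proj_apply_of_notMem sum_proj proj_mul_proj ht hx]

lemma proj_apply_map_of_mul_proj {T : Module.End ℝ V} {c : ℤ}
    (hT : ∀ k, T * Prj k = Prj (k + c) * T) {t : ℤ} {x : V} (hx : Prj t x = x) :
    Prj (t + c) (T x) = T x := by
  rw [← Module.End.mul_apply, ← hT, Module.End.mul_apply, hx]

lemma proj_apply_pow_map_of_mul_proj {T : Module.End ℝ V} {c : ℤ}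
    (hT : ∀ k, T * Prj k = Prj (k + c) * T) {t : ℤ} {x : V} (hx : Prj t x = x) (i : ℕ) :
    Prj (t + i * c) ((T ^ i) x) = (T ^ i) x := by
  induction i with
  | zero => simpa using hx
  | succ i ih =>
    rw [pow_succ', Module.End.mul_apply, Nat.cast_succ, add_one_mul, ← add_assoc]
    exact proj_apply_map_of_mul_proj hT ih

end Grading

/-- The graded `sl₂`-structure of the forms on a symplectic `2n`-manifold: `Prj k` projects onto
`k`-forms, `L` raises and `Λ` lowers the degree by two, and `[Λ, L]` is `n - t` in degree `t`. -/
structure IsGradedLefschetz {V : Type*} [AddCommGroup V] [Module ℝ V] (n : ℕ)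
    (Prj : ℤ → Module.End ℝ V) (L Λ : Module.End ℝ V) : Prop where
  sum_proj : ∑ k ∈ Icc (0 : ℤ) (2 * n), Prj k = 1
  proj_mul_proj : ∀ j k : ℤ, j ≠ k → Prj j * Prj k = 0
  L_mul_proj : ∀ k : ℤ, L * Prj k = Prj (k + 2) * L
  Λ_mul_proj : ∀ k : ℤ, Λ * Prj k = Prj (k - 2) * Λ
  Λ_L_apply : ∀ (t : ℤ) (x : V), Prj t x = x → Λ (L x) = L (Λ x) + ((n : ℝ) - t) • x

namespace IsGradedLefschetz

variable {V : Type*} [AddCommGroup V] [Module ℝ V] {n : ℕ} {Prj : ℤ → Module.End ℝ V}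
  {L Λ : Module.End ℝ V}

lemma of_sl₂ {H : Module.End ℝ V} (sum_proj : ∑ k ∈ Icc (0 : ℤ) (2 * n), Prj k = 1)
    (proj_mul_proj : ∀ j k : ℤ, j ≠ k → Prj j * Prj k = 0)
    (L_mul_proj : ∀ k : ℤ, L * Prj k = Prj (k + 2) * L)
    (Λ_mul_proj : ∀ k : ℤ, Λ * Prj k = Prj (k - 2) * Λ)
    (hH : H = ∑ k ∈ Icc (0 : ℤ) (2 * n), ((n : ℤ) - k) • Prj k) (hΛL : Λ * L - L * Λ = H) :
    IsGradedLefschetz n Prj L Λ where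
  sum_proj := sum_proj
  proj_mul_proj := proj_mul_proj
  L_mul_proj := L_mul_proj
  Λ_mul_proj := Λ_mul_proj
  Λ_L_apply t x hx := by
    rw [← sum_sub_smul_proj_apply sum_proj proj_mul_proj hx, ← hH, ← hΛL]
    simp

lemma eq_zero_of_degree_notMem (h : IsGradedLefschetz n Prj L Λ) {t : ℤ}
    (ht : t ∉ Icc (0 : ℤ) (2 * n)) {x : V} (hx : Prj t x = x) : x = 0 :=
  eq_zero_of_proj_apply_of_notMem h.sum_proj h.proj_mul_proj ht hx

lemma proj_apply_L_pow (h : IsGradedLefschetz n Prj L Λ) {t : ℤ} {x : V} (hx : Prj t x = x)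
    (i : ℕ) : Prj (t + 2 * i) ((L ^ i) x) = (L ^ i) x := by
  simpa [mul_comm] using proj_apply_pow_map_of_mul_proj h.L_mul_proj hx i

lemma proj_apply_Λ (h : IsGradedLefschetz n Prj L Λ) {t : ℤ} {x : V} (hx : Prj t x = x) :
    Prj (t - 2) (Λ x) = Λ x :=
  proj_apply_map_of_mul_proj (c := -2) h.Λ_mul_proj hx

lemma Λ_L_pow_succ_apply (h : IsGradedLefschetz n Prj L Λ) {t : ℤ} {x : V} (hx : Prj t x = x)
    (j : ℕ) : Λ ((L ^ (j + 1)) x) =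
      (L ^ (j + 1)) (Λ x) + ((j + 1) * ((n : ℝ) - t - j)) • (L ^ j) x := by
  induction j with
  | zero => simpa using h.Λ_L_apply t x hx
  | succ j ih =>
    rw [pow_succ', Module.End.mul_apply, h.Λ_L_apply _ _ (h.proj_apply_L_pow hx (j + 1)), ih,
      map_add, map_smul, ← Module.End.mul_apply L (L ^ j), ← pow_succ', add_assoc, ← add_smul]
    congr 2
    push_cast
    ring

lemma primitive_eq_zero_of_L_pow_eq_zero (h : IsGradedLefschetz n Prj L Λ) {t : ℤ} {x : V}
    (hx : Prj t x = x) (hΛx : Λ x = 0) {j : ℕ} (hj : (L ^ j) x = 0)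
    (hnt : ∀ i : ℕ, i < j → (i : ℤ) ≠ n - t) : x = 0 := by
  induction j with
  | zero => simpa using hj
  | succ j ih =>
    refine ih ?_ fun i hi => hnt i (Nat.lt_succ_of_lt hi)
    have hcoef : ((j : ℝ) + 1) * ((n : ℝ) - t - j) ≠ 0 := by
      have : (j : ℤ) ≠ n - t := hnt j (Nat.lt_succ_self j)
      refine mul_ne_zero (by positivity) (sub_ne_zero.mpr ?_)
      exact_mod_cast this.symm
    have hΛLx := h.Λ_L_pow_succ_apply hx j
    rw [hj, hΛx, map_zero, map_zero, zero_add, eq_comm, smul_eq_zero] at hΛLx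
    exact hΛLx.resolve_left hcoef

lemma primitive_eq_zero_of_lt_degree (h : IsGradedLefschetz n Prj L Λ) {t : ℤ} {x : V}
    (hx : Prj t x = x) (hΛx : Λ x = 0) (ht : n < t) : x = 0 := by
  refine h.primitive_eq_zero_of_L_pow_eq_zero hx hΛx (j := n) ?_ fun i _ => by omega
  refine h.eq_zero_of_degree_notMem ?_ (h.proj_apply_L_pow hx n)
  simp only [mem_Icc, not_and_or, not_le]
  omega

lemma L_pow_succ_Λ_eq_zero (h : IsGradedLefschetz n Prj L Λ) {t : ℤ} {u : V}
    (hu : Prj t u = u) {j : ℕ} (hj : (L ^ j) u = 0) : (L ^ (j + 1)) (Λ u) = 0 := by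
  cases j with
  | zero => simp_all
  | succ j =>
    have hΛLu := congrArg L (h.Λ_L_pow_succ_apply hu j)
    rw [hj, map_zero, map_zero, map_add, map_smul, ← Module.End.mul_apply L (L ^ j),
      ← pow_succ', hj, smul_zero, add_zero, ← Module.End.mul_apply, ← pow_succ'] at hΛLu
    exact hΛLu.symm

lemma L_pow_add_Λ_pow_eq_zero (h : IsGradedLefschetz n Prj L Λ) {t : ℤ} {y : V}
    (hy : Prj t y = y) {j : ℕ} (hj : (L ^ j) y = 0) (k : ℕ) : (L ^ (j + k)) ((Λ ^ k) y) = 0 := by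
  induction k with
  | zero => simpa using hj
  | succ k ih =>
    rw [pow_succ', Module.End.mul_apply, ← add_assoc]
    exact h.L_pow_succ_Λ_eq_zero
      (proj_apply_pow_map_of_mul_proj (c := -2) h.Λ_mul_proj hy k) ih

/-- The injective half of hard Lefschetz. By induction on the degree, `Λ x` satisfies the same
hypothesis in degree `t - 2`, hence vanishes, so `x` is primitive. -/
lemma eq_zero_of_L_pow_eq_zero (h : IsGradedLefschetz n Prj L Λ) {t : ℤ} {x : V}
    (hx : Prj t x = x) {j : ℕ} (hj : (L ^ j) x = 0) (hjt : (j : ℤ) ≤ n - t) : x = 0 := by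
  suffices ∀ N : ℕ, ∀ (t : ℤ) (x : V) (j : ℕ), t < N → Prj t x = x → (L ^ j) x = 0 →
      (j : ℤ) ≤ n - t → x = 0 from this (t.toNat + 1) t x j (by omega) hx hj hjt
  intro N
  induction N with
  | zero =>
    intro t x j ht hx _ _
    exact h.eq_zero_of_degree_notMem (by simp only [mem_Icc]; omega) hx
  | succ N ih =>
    intro t x j ht hx hj hjt
    have hΛx : Λ x = 0 := ih (t - 2) (Λ x) (j + 1) (by omega) (h.proj_apply_Λ hx)
      (h.L_pow_succ_Λ_eq_zero hx hj) (by omega)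
    exact h.primitive_eq_zero_of_L_pow_eq_zero hx hΛx hj fun i hi => by omega

lemma Λ_pow_eq_zero_of_L_pow_eq_zero (h : IsGradedLefschetz n Prj L Λ) {t : ℤ} {y : V}
    (hy : Prj t y = y) {j k : ℕ} (hj : (L ^ j) y = 0) (hjk : (j : ℤ) ≤ n - t + k) :
    (Λ ^ k) y = 0 :=
  h.eq_zero_of_L_pow_eq_zero (proj_apply_pow_map_of_mul_proj (c := -2) h.Λ_mul_proj hy k)
    (h.L_pow_add_Λ_pow_eq_zero hy hj k) (by push_cast; omega)

lemma L_pow_sub_add_one_primitive_eq_zero (h : IsGradedLefschetz n Prj L Λ) {s : ℕ} (hs : s ≤ n)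
    {B : V} (hB : Prj s B = B) (hΛB : Λ B = 0) : (L ^ (n - s + 1)) B = 0 := by
  refine h.primitive_eq_zero_of_lt_degree (h.proj_apply_L_pow hB _) ?_ (by push_cast; omega)
  rw [h.Λ_L_pow_succ_apply hB, hΛB, map_zero, zero_add, Nat.cast_sub hs]
  exact smul_eq_zero_of_left (by push_cast; ring) _

lemma exists_eq_primitive_add_L_primitive (h : IsGradedLefschetz n Prj L Λ) {t : ℤ} {y : V}
    (hy : Prj t y = y) (hΛΛy : Λ (Λ y) = 0) (ht : t ≤ n + 1) :
    ∃ B₁ B₂ : V, (Prj t B₁ = B₁ ∧ Λ B₁ = 0) ∧ (Prj (t - 2) B₂ = B₂ ∧ Λ B₂ = 0) ∧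
      y = B₁ + L B₂ := by
  set c : ℝ := n - (t - 2) with hc
  have hc0 : c ≠ 0 := by rw [hc]; exact_mod_cast (show (n : ℤ) - (t - 2) ≠ 0 by omega)
  have hB₂ : Prj (t - 2) (c⁻¹ • Λ y) = c⁻¹ • Λ y := by rw [map_smul, h.proj_apply_Λ hy]
  have hΛB₂ : Λ (c⁻¹ • Λ y) = 0 := by rw [map_smul, hΛΛy, smul_zero]
  have hLB₂ : Prj t (L (c⁻¹ • Λ y)) = L (c⁻¹ • Λ y) := by
    simpa using proj_apply_map_of_mul_proj h.L_mul_proj hB₂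
  have hΛLB₂ : Λ (L (c⁻¹ • Λ y)) = Λ y := by
    rw [h.Λ_L_apply _ _ hB₂, hΛB₂, map_zero, zero_add, smul_smul, Int.cast_sub, Int.cast_ofNat,
      ← hc, mul_inv_cancel₀ hc0, one_smul]
  refine ⟨y - L (c⁻¹ • Λ y), c⁻¹ • Λ y, ⟨?_, ?_⟩, ⟨hB₂, hΛB₂⟩, (sub_add_cancel _ _).symm⟩
  · rw [map_sub, hy, hLB₂]
  · rw [map_sub, hΛLB₂, sub_self]

end IsGradedLefschetz

theorem d_two_term_on_primitive_general
    (n : ℕ) (V : Type*) [AddCommGroup V] [Module ℝ V]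
    (Prj : ℤ → Module.End ℝ V)
    (hsum : ∑ k ∈ Finset.Icc (0 : ℤ) (2 * n), Prj k = 1)
    (horth : ∀ j k : ℤ, j ≠ k → Prj j * Prj k = 0)
    (L Λ H : Module.End ℝ V)
    (hLdeg : ∀ k : ℤ, L * Prj k = Prj (k + 2) * L)
    (hΛdeg : ∀ k : ℤ, Λ * Prj k = Prj (k - 2) * Λ)
    (hH : H = ∑ k ∈ Finset.Icc (0 : ℤ) (2 * n), ((n : ℤ) - k) • Prj k)
    (sl₁ : Λ * L - L * Λ = H)
    (d : Module.End ℝ V)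
    (hddeg : ∀ k : ℤ, d * Prj k = Prj (k + 1) * d)
    (hdL : d * L = L * d) :
    ∀ s : ℕ, s ≤ n → ∀ B : V, Prj s B = B → Λ B = 0 →
      ∃ B₁ B₂ : V,
        (Prj ((s : ℤ) + 1) B₁ = B₁ ∧ Λ B₁ = 0) ∧
        (Prj ((s : ℤ) - 1) B₂ = B₂ ∧ Λ B₂ = 0) ∧
        d B = B₁ + L B₂ ∧
        (s = n → B₁ = 0) ∧
        (∀ r : ℕ, d ((L ^ r) B) = (L ^ r) B₁ + (L ^ (r + 1)) B₂) := by
  intro s hs B hB hΛB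
  have h := IsGradedLefschetz.of_sl₂ hsum horth hLdeg hΛdeg hH sl₁
  have hdLpow (r : ℕ) (x : V) : d ((L ^ r) x) = (L ^ r) (d x) :=
    LinearMap.congr_fun ((Commute.pow_right hdL r).eq) x
  have hdB : Prj (s + 1) (d B) = d B := proj_apply_map_of_mul_proj hddeg hB
  have hLdB : (L ^ (n - s + 1)) (d B) = 0 := by
    rw [← hdLpow, h.L_pow_sub_add_one_primitive_eq_zero hs hB hΛB, map_zero]
  have hΛΛdB : Λ (Λ (d B)) = 0 := by
    simpa only [sq, Module.End.mul_apply] using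
      h.Λ_pow_eq_zero_of_L_pow_eq_zero hdB hLdB (k := 2) (by push_cast; omega)
  obtain ⟨B₁, B₂, ⟨hB₁, hΛB₁⟩, ⟨hB₂, hΛB₂⟩, hdB_eq⟩ :=
    h.exists_eq_primitive_add_L_primitive hdB hΛΛdB (by omega)
  rw [show (s : ℤ) + 1 - 2 = s - 1 by ring] at hB₂
  refine ⟨B₁, B₂, ⟨hB₁, hΛB₁⟩, ⟨hB₂, hΛB₂⟩, hdB_eq, ?_, fun r => ?_⟩
  · rintro rfl
    exact h.primitive_eq_zero_of_lt_degree hB₁ hΛB₁ (by omega)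
  · rw [hdLpow, hdB_eq, map_add, pow_succ, Module.End.mul_apply]

/-- **Two-term decomposition of `d` on primitive forms.**  `V` models the differential
forms of a symplectic manifold `(M^{2n}, ω)` with `dω = 0`: `Prj k` is the projection
onto `k`-forms, `L` the Lefschetz operator, `Λ` its dual, `H = ∑ₖ (n-k) • Prj k`, with
the `sl(2)` relations; `d` is the exterior derivative, which raises degree by one and
commutes with `L` (this encodes `dω = 0`).  If `B` is a primitive `s`-form with `s < n`,
then `dB = B_{s+1} + L B_{s-1}` for some primitive forms `B_{s+1} ∈ P^{s+1}` and
`B_{s-1} ∈ P^{s-1}`; if `s = n` then `dB = L B_{n-1}` (i.e. the `P^{s+1}`-term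
vanishes).  Consequently `d(L^r B) = L^r B_{s+1} + L^{r+1} B_{s-1}`, i.e. `d` maps
`L^{r,s}` into `L^{r,s+1} ⊕ L^{r+1,s-1}`. -/
theorem d_two_term_on_primitive
    (n : ℕ) (V : Type*) [AddCommGroup V] [Module ℝ V]
    (Prj : ℤ → Module.End ℝ V)
    (hsum : ∑ k ∈ Finset.Icc (0 : ℤ) (2 * n), Prj k = 1)
    (horth : ∀ j k : ℤ, j ≠ k → Prj j * Prj k = 0)
    (hidem : ∀ k : ℤ, Prj k * Prj k = Prj k)
    (L Λ H : Module.End ℝ V)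
    (hLdeg : ∀ k : ℤ, L * Prj k = Prj (k + 2) * L)
    (hΛdeg : ∀ k : ℤ, Λ * Prj k = Prj (k - 2) * Λ)
    (hH : H = ∑ k ∈ Finset.Icc (0 : ℤ) (2 * n), ((n : ℤ) - k) • Prj k)
    (sl₁ : Λ * L - L * Λ = H)
    (sl₂ : H * Λ - Λ * H = (2 : ℤ) • Λ)
    (sl₃ : H * L - L * H = (-2 : ℤ) • L)
    (d : Module.End ℝ V)
    (hddeg : ∀ k : ℤ, d * Prj k = Prj (k + 1) * d)
    (hdL : d * L = L * d) :
    ∀ s : ℕ, s ≤ n → ∀ B : V, Prj s B = B → Λ B = 0 →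
      ∃ B₁ B₂ : V,
        (Prj ((s : ℤ) + 1) B₁ = B₁ ∧ Λ B₁ = 0) ∧
        (Prj ((s : ℤ) - 1) B₂ = B₂ ∧ Λ B₂ = 0) ∧
        d B = B₁ + L B₂ ∧
        (s = n → B₁ = 0) ∧
        (∀ r : ℕ, d ((L ^ r) B) = (L ^ r) B₁ + (L ^ (r + 1)) B₂) :=
  d_two_term_on_primitive_general n V Prj hsum horth L Λ H hLdeg hΛdeg hH sl₁ d hddeg hdL
end

section
/- On primitive differential forms, the operators ∂₊ and ∂₋ defined by the Lefschetz decomposition of d admit the expressions ∂₊ = d - L H^{-1} Λ d and ∂₋ = H^{-1} Λ d. -/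
/-!
Applying `[Λ, L] = H` to the primitive form `∂₋B` gives `Λ(L ∂₋B) = H ∂₋B`, and `Λ ∂₊B = 0`,
so `Λ dB = H ∂₋B`. As `∂₋B` has degree `k - 1`, `H` acts on it by the scalar `n - k + 1`, which
is nonzero because `k ≤ n`; dividing by it gives `∂₋`, and then `∂₊B = dB - L ∂₋B`.
-/

section GradedProjections

variable {ι R V : Type*} [Ring R] [AddCommGroup V] [Module R V] {P : ι → Module.End R V}

theorem proj_apply_eq_zero_of_ne (horth : ∀ i j, i ≠ j → P i * P j = 0) {m j : ι} {x : V}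
    (hx : P m x = x) (hj : j ≠ m) : P j x = 0 := by
  rw [← hx, ← Module.End.mul_apply, horth j m hj, LinearMap.zero_apply]

theorem sum_zsmul_proj_apply_of_proj_apply_eq (s : Finset ι) (hsum : ∑ i ∈ s, P i = 1)
    (horth : ∀ i j, i ≠ j → P i * P j = 0) (c : ι → ℤ) {m : ι} {x : V} (hx : P m x = x) :
    (∑ i ∈ s, c i • P i) x = c m • x :=
  calc (∑ i ∈ s, c i • P i) x = ∑ i ∈ s, c m • P i x := by
        rw [LinearMap.sum_apply]
        refine Finset.sum_congr rfl fun i _ => ?_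
        rcases eq_or_ne i m with rfl | hi
        · rfl
        · simp [proj_apply_eq_zero_of_ne horth hx hi]
    _ = c m • x := by rw [← Finset.smul_sum, ← LinearMap.sum_apply, hsum, Module.End.one_apply]

end GradedProjections

theorem lowering_raising_apply_of_lowering_eq_zero {R V : Type*} [Ring R] [AddCommGroup V]
    [Module R V] {L Λ H : Module.End R V} (hcomm : Λ * L - L * Λ = H) {y : V} (hy : Λ y = 0) :
    Λ (L y) = H y := by
  rw [← hcomm, LinearMap.sub_apply, Module.End.mul_apply, Module.End.mul_apply, hy, map_zero,
    sub_zero]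

theorem dplus_dminus_expressions_general
    (n : ℕ) (V : Type*) [AddCommGroup V] [Module ℝ V]
    (Prj : ℤ → Module.End ℝ V)
    (hsum : ∑ k ∈ Finset.Icc (0 : ℤ) (2 * n), Prj k = 1)
    (horth : ∀ j k : ℤ, j ≠ k → Prj j * Prj k = 0)
    (L Λ H : Module.End ℝ V)
    (hH : H = ∑ k ∈ Finset.Icc (0 : ℤ) (2 * n), ((n : ℤ) - k) • Prj k)
    (sl₁ : Λ * L - L * Λ = H)
    (d : Module.End ℝ V)
    (Dp Dm : Module.End ℝ V)
    (hDpDm : ∀ s : ℕ, s ≤ n → ∀ B : V, Prj s B = B → Λ B = 0 →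
      (Prj ((s : ℤ) + 1) (Dp B) = Dp B ∧ Λ (Dp B) = 0) ∧
      (Prj ((s : ℤ) - 1) (Dm B) = Dm B ∧ Λ (Dm B) = 0) ∧
      d B = Dp B + L (Dm B)) :
    ∀ k : ℕ, k ≤ n → ∀ B : V, Prj k B = B → Λ B = 0 →
      Dm B = (((n : ℝ) - k + 1))⁻¹ • Λ (d B) ∧
      Dp B = d B - (((n : ℝ) - k + 1))⁻¹ • L (Λ (d B)) := by
  intro k hk B hB hΛB
  obtain ⟨⟨-, hΛDp⟩, ⟨hDm_deg, hΛDm⟩, hd⟩ := hDpDm k hk B hB hΛB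
  have hH_Dm : H (Dm B) = ((n : ℤ) - ((k : ℤ) - 1)) • Dm B :=
    hH ▸ sum_zsmul_proj_apply_of_proj_apply_eq _ hsum horth _ hDm_deg
  have hΛd : Λ (d B) = ((n : ℝ) - k + 1) • Dm B := by
    rw [hd, map_add, hΛDp, zero_add, lowering_raising_apply_of_lowering_eq_zero sl₁ hΛDm, hH_Dm,
      ← Int.cast_smul_eq_zsmul ℝ]
    push_cast
    ring_nf
  have hc : (n : ℝ) - k + 1 ≠ 0 := by
    have : (k : ℝ) ≤ n := by exact_mod_cast hk
    linarith
  have hDm : Dm B = ((n : ℝ) - k + 1)⁻¹ • Λ (d B) := by rw [hΛd, inv_smul_smul₀ hc]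
  refine ⟨hDm, ?_⟩
  rw [← map_smul, ← hDm, hd, add_sub_cancel_right]

/-- **Expressions `∂₊ = d - L H⁻¹ Λ d` and `∂₋ = H⁻¹ Λ d` on primitive forms.**
`V` models the differential forms of a symplectic manifold `(M^{2n}, ω)`: `Prj k` is the
projection onto `k`-forms, `L`, `Λ`, `H = ∑ₖ (n-k) • Prj k` the `sl(2)`-triple, and `d`
the exterior derivative (degree `+1`, commuting with `L` since `dω = 0`).  For a
primitive `s`-form `B` (`s ≤ n`), `Dp B` and `Dm B` are the primitive forms with
`dB = Dp B + L (Dm B)` (the operators `∂₊, ∂₋`).  Then on a primitive `k`-form `B`,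
since `ΛdB` has degree `k-1` where `H` acts by the invertible scalar `n-k+1`,
`∂₋ B = (n-k+1)⁻¹ • Λ(dB)` (that is, `∂₋ = H⁻¹Λd`) and
`∂₊ B = dB - (n-k+1)⁻¹ • L(Λ(dB))` (that is, `∂₊ = d - LH⁻¹Λd`). -/
theorem dplus_dminus_expressions
    (n : ℕ) (V : Type*) [AddCommGroup V] [Module ℝ V]
    (Prj : ℤ → Module.End ℝ V)
    (hsum : ∑ k ∈ Finset.Icc (0 : ℤ) (2 * n), Prj k = 1)
    (horth : ∀ j k : ℤ, j ≠ k → Prj j * Prj k = 0)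
    (hidem : ∀ k : ℤ, Prj k * Prj k = Prj k)
    (L Λ H : Module.End ℝ V)
    (hLdeg : ∀ k : ℤ, L * Prj k = Prj (k + 2) * L)
    (hΛdeg : ∀ k : ℤ, Λ * Prj k = Prj (k - 2) * Λ)
    (hH : H = ∑ k ∈ Finset.Icc (0 : ℤ) (2 * n), ((n : ℤ) - k) • Prj k)
    (sl₁ : Λ * L - L * Λ = H)
    (sl₂ : H * Λ - Λ * H = (2 : ℤ) • Λ)
    (sl₃ : H * L - L * H = (-2 : ℤ) • L)
    (d : Module.End ℝ V)
    (hddeg : ∀ k : ℤ, d * Prj k = Prj (k + 1) * d)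
    (hdL : d * L = L * d)
    (Dp Dm : Module.End ℝ V)
    (hDpDm : ∀ s : ℕ, s ≤ n → ∀ B : V, Prj s B = B → Λ B = 0 →
      (Prj ((s : ℤ) + 1) (Dp B) = Dp B ∧ Λ (Dp B) = 0) ∧
      (Prj ((s : ℤ) - 1) (Dm B) = Dm B ∧ Λ (Dm B) = 0) ∧
      d B = Dp B + L (Dm B)) :
    ∀ k : ℕ, k ≤ n → ∀ B : V, Prj k B = B → Λ B = 0 →
      Dm B = (((n : ℝ) - k + 1))⁻¹ • Λ (d B) ∧
      Dp B = d B - (((n : ℝ) - k + 1))⁻¹ • L (Λ (d B)) :=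
  dplus_dminus_expressions_general n V Prj hsum horth L Λ H hH sl₁ d Dp Dm hDpDm
end

section
/- On a symplectic manifold, ∂₊ commutes with the Lefschetz operator L, and L∂₋ commutes with L; however [L∂₋', L] = -L²∂₋ where ∂₋' = (H+R)∂₋. -/
/-!
On `L^r B` with `B` primitive, `∂₊`, `∂₋` and `∂₋'` all act through `L^r` up to a scalar
depending on `r`, so their commutator with `L` is the jump of that scalar from `r` to `r + 1`.
The scalar is constant for `∂₊` and `∂₋`, while for `∂₋'` it is `n - r - s + 1`, which drops by one.
-/

lemma mul_mul_sub_mul_mul_eq_mul_sub {A : Type*} [Ring A] (f L : A) :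
    L * f * L - L * (L * f) = L * (f * L - L * f) := by
  noncomm_ring

namespace Module.End

variable {R V : Type*} [CommRing R] [AddCommGroup V] [Module R V]

lemma pow_succ_apply' (L : Module.End R V) (m : ℕ) (x : V) :
    (L ^ (m + 1)) x = L ((L ^ m) x) := by
  rw [pow_succ', mul_apply]

lemma comm_apply_pow_of_apply_pow_eq_smul {f L : Module.End R V} {x y : V} {c : ℕ → R}
    {r : ℕ} (hr : f ((L ^ r) x) = c r • (L ^ r) y)
    (hr₁ : f ((L ^ (r + 1)) x) = c (r + 1) • (L ^ (r + 1)) y) :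
    (f * L - L * f) ((L ^ r) x) = (c (r + 1) - c r) • (L ^ (r + 1)) y := by
  rw [LinearMap.sub_apply, mul_apply, mul_apply, ← pow_succ_apply', hr₁, hr, map_smul,
    ← pow_succ_apply', sub_smul]

lemma comm_apply_pow_eq_zero_of_apply_pow_eq {f L : Module.End R V} {x : V} {r : ℕ}
    (hr : f ((L ^ r) x) = (L ^ r) (f x))
    (hr₁ : f ((L ^ (r + 1)) x) = (L ^ (r + 1)) (f x)) :
    (f * L - L * f) ((L ^ r) x) = 0 := by
  have h := comm_apply_pow_of_apply_pow_eq_smul (c := fun _ => (1 : R)) (y := f x) (r := r)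
    (by rwa [one_smul]) (by rwa [one_smul])
  rwa [sub_self, zero_smul] at h

end Module.End

open Module.End in
theorem dplus_Ldminus_commute_with_L_general
    (n : ℕ) (V : Type*) [AddCommGroup V] [Module ℝ V]
    (Prj : ℤ → Module.End ℝ V)
    (L Λ : Module.End ℝ V)
    (d : Module.End ℝ V)
    (Dp Dm Dm' : Module.End ℝ V)
    (hDpDm : ∀ (r s : ℕ), s ≤ n → ∀ B : V, Prj s B = B → Λ B = 0 →
      (Prj ((s : ℤ) + 1) (Dp B) = Dp B ∧ Λ (Dp B) = 0) ∧
      (Prj ((s : ℤ) - 1) (Dm B) = Dm B ∧ Λ (Dm B) = 0) ∧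
      Dp ((L ^ r) B) = (L ^ r) (Dp B) ∧
      Dm ((L ^ r) B) = (L ^ r) (Dm B) ∧
      d ((L ^ r) B) = (L ^ r) (Dp B) + (L ^ (r + 1)) (Dm B))
    (hDm' : ∀ (r s : ℕ), s ≤ n → ∀ B : V, Prj s B = B → Λ B = 0 →
      Dm' ((L ^ r) B) = ((n : ℝ) - r - s + 1) • (L ^ r) (Dm B)) :
    ∀ (r s : ℕ), s ≤ n → ∀ B : V, Prj s B = B → Λ B = 0 →
      (Dp * L - L * Dp) ((L ^ r) B) = 0 ∧
      ((L * Dm) * L - L * (L * Dm)) ((L ^ r) B) = 0 ∧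
      ((L * Dm') * L - L * (L * Dm')) ((L ^ r) B)
        = -(((L * L) * Dm) ((L ^ r) B)) := by
  intro r s hs B hB hΛB
  obtain ⟨-, -, hDp₀, hDm₀, -⟩ := hDpDm r s hs B hB hΛB
  obtain ⟨-, -, hDp₁, hDm₁, -⟩ := hDpDm (r + 1) s hs B hB hΛB
  have hDm'_comm := comm_apply_pow_of_apply_pow_eq_smul
    (c := fun m : ℕ => (n : ℝ) - m - s + 1) (hDm' r s hs B hB hΛB) (hDm' (r + 1) s hs B hB hΛB)
  have hjump : (n : ℝ) - (r + 1 : ℕ) - s + 1 - ((n : ℝ) - r - s + 1) = -1 := by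
    push_cast
    ring
  refine ⟨comm_apply_pow_eq_zero_of_apply_pow_eq hDp₀ hDp₁, ?_, ?_⟩
  · rw [mul_mul_sub_mul_mul_eq_mul_sub, mul_apply, comm_apply_pow_eq_zero_of_apply_pow_eq hDm₀ hDm₁,
      map_zero]
  · rw [mul_mul_sub_mul_mul_eq_mul_sub, mul_apply, hDm'_comm, hjump, neg_one_smul, map_neg, mul_apply,
      mul_apply, hDm₀, pow_succ_apply']

/-- **Commutation of `∂₊` and `L∂₋` with `L`.**  `V` models the differential forms of a
symplectic manifold `(M^{2n}, ω)`: `Prj k` is the projection onto `k`-forms, `(L, Λ, H)`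
the `sl(2)`-triple, and `d = ∂₊ + L∂₋` the Lefschetz decomposition of the exterior
derivative, with `Dp = ∂₊` preserving the `L`-power `r` and raising the primitive degree,
`Dm = ∂₋` lowering it; `R` multiplies `L^r B_s` by `r` and `Dm' = ∂₋' = (H+R)∂₋`.
Then `[∂₊, L] = 0` and `[L∂₋, L] = 0` on every `L^{r,s}`, but
`[L∂₋', L] = -L²∂₋`. -/
theorem dplus_Ldminus_commute_with_L
    (n : ℕ) (V : Type*) [AddCommGroup V] [Module ℝ V]
    (Prj : ℤ → Module.End ℝ V)
    (hsum : ∑ k ∈ Finset.Icc (0 : ℤ) (2 * n), Prj k = 1)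
    (horth : ∀ j k : ℤ, j ≠ k → Prj j * Prj k = 0)
    (hidem : ∀ k : ℤ, Prj k * Prj k = Prj k)
    (L Λ H : Module.End ℝ V)
    (hLdeg : ∀ k : ℤ, L * Prj k = Prj (k + 2) * L)
    (hΛdeg : ∀ k : ℤ, Λ * Prj k = Prj (k - 2) * Λ)
    (hH : H = ∑ k ∈ Finset.Icc (0 : ℤ) (2 * n), ((n : ℤ) - k) • Prj k)
    (sl₁ : Λ * L - L * Λ = H)
    (sl₂ : H * Λ - Λ * H = (2 : ℤ) • Λ)
    (sl₃ : H * L - L * H = (-2 : ℤ) • L)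
    (d : Module.End ℝ V)
    (hddeg : ∀ k : ℤ, d * Prj k = Prj (k + 1) * d)
    (hdL : d * L = L * d)
    (Dp Dm Dm' R : Module.End ℝ V)
    (hDpDm : ∀ (r s : ℕ), s ≤ n → ∀ B : V, Prj s B = B → Λ B = 0 →
      (Prj ((s : ℤ) + 1) (Dp B) = Dp B ∧ Λ (Dp B) = 0) ∧
      (Prj ((s : ℤ) - 1) (Dm B) = Dm B ∧ Λ (Dm B) = 0) ∧
      Dp ((L ^ r) B) = (L ^ r) (Dp B) ∧
      Dm ((L ^ r) B) = (L ^ r) (Dm B) ∧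
      d ((L ^ r) B) = (L ^ r) (Dp B) + (L ^ (r + 1)) (Dm B))
    (hR : ∀ (r s : ℕ), s ≤ n → ∀ B : V, Prj s B = B → Λ B = 0 →
      R ((L ^ r) B) = (r : ℤ) • (L ^ r) B)
    (hDm' : ∀ (r s : ℕ), s ≤ n → ∀ B : V, Prj s B = B → Λ B = 0 →
      Dm' ((L ^ r) B) = ((n : ℝ) - r - s + 1) • (L ^ r) (Dm B)) :
    ∀ (r s : ℕ), s ≤ n → ∀ B : V, Prj s B = B → Λ B = 0 →
      (Dp * L - L * Dp) ((L ^ r) B) = 0 ∧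
      ((L * Dm) * L - L * (L * Dm)) ((L ^ r) B) = 0 ∧
      ((L * Dm') * L - L * (L * Dm')) ((L ^ r) B)
        = -(((L * L) * Dm) ((L ^ r) B)) :=
  dplus_Ldminus_commute_with_L_general n V Prj L Λ d Dp Dm Dm' hDpDm hDm'
end

section
/- On a symplectic manifold, ∂₊ and ∂₋ can be expressed in terms of d and d^Λ = dΛ - Λd as: ∂₊ = (H+2R+1)^{-1}[(H+R+1)d + L d^Λ] and ∂₋ = [(H+2R+1)(H+R)]^{-1}[Λd - (H+R)d^Λ]. -/
/-!
On `L^r B`, with `B` primitive of degree `s` and `μ = n - s`, every operator involved acts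
diagonally. `∂₊B` and `∂₋B` are primitive of weights `μ - 1` and `μ + 1`, and `[Λ, L] = H` gives
`Λ L^{m+1} v = (m+1)(μ-m) L^m v` for `v` primitive of weight `μ`; hence
`d^Λ (L^r B) = r L^{r-1} ∂₊B - (μ-r+1) L^r ∂₋B`, and both identities reduce to equalities of
integer coefficients. The one subtlety is that `∂₊B` may have degree `n + 1`, where `R` is not
prescribed; but a primitive form of degree `k > n` vanishes, since `L^{n+1}` pushes it out of the
degree range and `Λ L^{m+1} v = (m+1)(n-k-m) L^m v` with nonzero coefficients walks back down.
-/

open Finset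

section Grading

variable {K V ι : Type*} [CommRing K] [AddCommGroup V] [Module K V]

theorem apply_eq_zero_of_ne {P : ι → Module.End K V} (horth : ∀ j k, j ≠ k → P j * P k = 0)
    {j k : ι} {v : V} (hv : P k v = v) (hjk : j ≠ k) : P j v = 0 := by
  rw [← hv, ← Module.End.mul_apply, horth j k hjk, LinearMap.zero_apply]

theorem eq_zero_of_apply_eq_self_of_notMem {s : Finset ι} {P : ι → Module.End K V}
    (hsum : ∑ k ∈ s, P k = 1) (horth : ∀ j k, j ≠ k → P j * P k = 0) {k : ι} {v : V}
    (hv : P k v = v) (hk : k ∉ s) : v = 0 := by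
  calc v = (∑ j ∈ s, P j) v := by rw [hsum, Module.End.one_apply]
    _ = 0 := by
      rw [LinearMap.sum_apply]
      exact sum_eq_zero fun j hj => apply_eq_zero_of_ne horth hv (ne_of_mem_of_not_mem hj hk)

theorem sum_smul_apply_of_apply_eq_self {s : Finset ι} {P : ι → Module.End K V}
    (hsum : ∑ k ∈ s, P k = 1) (horth : ∀ j k, j ≠ k → P j * P k = 0) (c : ι → ℤ)
    {k : ι} {v : V} (hv : P k v = v) : (∑ j ∈ s, c j • P j) v = c k • v := by
  by_cases hk : k ∈ s
  · rw [LinearMap.sum_apply, sum_eq_single_of_mem k hk, LinearMap.smul_apply, hv]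
    intro j _ hjk
    rw [LinearMap.smul_apply, apply_eq_zero_of_ne horth hv hjk, smul_zero]
  · simp [eq_zero_of_apply_eq_self_of_notMem hsum horth hv hk]

theorem apply_pow_apply_eq_self [AddMonoid ι] {P : ι → Module.End K V} {T : Module.End K V}
    {a : ι} (hT : ∀ k, T * P k = P (k + a) * T) {k : ι} {v : V} (hv : P k v = v) (m : ℕ) :
    P (k + m • a) ((T ^ m) v) = (T ^ m) v := by
  induction m with
  | zero => simpa using hv
  | succ m ih =>
    rw [succ_nsmul, ← add_assoc, pow_succ', Module.End.mul_apply, ← Module.End.mul_apply,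
      ← hT, Module.End.mul_apply, ih]

end Grading

section Sl2

variable {K V : Type*} [CommRing K] [AddCommGroup V] [Module K V]

structure IsPrimitive (L Λ H : Module.End K V) (μ : ℤ) (v : V) : Prop where
  lambda_eq_zero : Λ v = 0
  h_pow_apply : ∀ m : ℕ, H ((L ^ m) v) = (μ - 2 * m) • (L ^ m) v

variable {L Λ H : Module.End K V} {μ : ℤ} {v : V}

theorem IsPrimitive.lambda_pow_succ_apply (hv : IsPrimitive L Λ H μ v)
    (sl : Λ * L - L * Λ = H) (m : ℕ) :
    Λ ((L ^ (m + 1)) v) = (((m : ℤ) + 1) * (μ - m)) • (L ^ m) v := by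
  have hΛL : ∀ w, Λ (L w) = L (Λ w) + H w := fun w => by
    rw [← sl]; simp
  induction m with
  | zero => simpa [hΛL, hv.lambda_eq_zero] using hv.h_pow_apply 0
  | succ m ih =>
    rw [pow_succ' L (m + 1), Module.End.mul_apply, hΛL, ih, map_zsmul, hv.h_pow_apply,
      ← Module.End.mul_apply, ← pow_succ']
    push_cast
    module

-- At `r = 0` the truncated `r - 1` is harmless, as the coefficient vanishes.
theorem IsPrimitive.lambda_pow_apply (hv : IsPrimitive L Λ H μ v) (sl : Λ * L - L * Λ = H)
    (r : ℕ) : Λ ((L ^ r) v) = ((r : ℤ) * (μ - r + 1)) • (L ^ (r - 1)) v := by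
  rcases r with _ | m
  · simp [hv.lambda_eq_zero]
  · rw [hv.lambda_pow_succ_apply sl, Nat.add_sub_cancel]
    push_cast
    ring_nf

theorem IsPrimitive.eq_zero_of_pow_apply_eq_zero [IsAddTorsionFree V]
    (hv : IsPrimitive L Λ H μ v) (sl : Λ * L - L * Λ = H) (hμ : μ < 0) {N : ℕ}
    (hN : (L ^ N) v = 0) : v = 0 := by
  induction N with
  | zero => simpa using hN
  | succ m ih =>
    apply ih
    have h := hv.lambda_pow_succ_apply sl m
    rw [hN, map_zero, eq_comm, IsAddTorsionFree.zsmul_eq_zero_iff_right] at h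
    · exact h
    · apply mul_ne_zero <;> omega

end Sl2

section LefschetzGrading

variable {K V : Type*} [CommRing K] [AddCommGroup V] [Module K V] {n : ℕ}
  {Prj : ℤ → Module.End K V} {L Λ H : Module.End K V} {k : ℤ} {v : V}

theorem isPrimitive_of_apply_eq_self (hsum : ∑ k ∈ Icc (0 : ℤ) (2 * n), Prj k = 1)
    (horth : ∀ j k : ℤ, j ≠ k → Prj j * Prj k = 0) (hLdeg : ∀ k : ℤ, L * Prj k = Prj (k + 2) * L)
    (hH : H = ∑ k ∈ Icc (0 : ℤ) (2 * n), ((n : ℤ) - k) • Prj k) (hv : Prj k v = v)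
    (hΛ : Λ v = 0) : IsPrimitive L Λ H (n - k) v where
  lambda_eq_zero := hΛ
  h_pow_apply m := by
    rw [hH, sum_smul_apply_of_apply_eq_self hsum horth _ (apply_pow_apply_eq_self hLdeg hv m),
      nsmul_eq_mul]
    ring_nf

theorem eq_zero_of_apply_eq_self_of_lt [IsAddTorsionFree V]
    (hsum : ∑ k ∈ Icc (0 : ℤ) (2 * n), Prj k = 1)
    (horth : ∀ j k : ℤ, j ≠ k → Prj j * Prj k = 0) (hLdeg : ∀ k : ℤ, L * Prj k = Prj (k + 2) * L)
    (hH : H = ∑ k ∈ Icc (0 : ℤ) (2 * n), ((n : ℤ) - k) • Prj k) (sl : Λ * L - L * Λ = H)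
    (hv : Prj k v = v) (hΛ : Λ v = 0) (hk : n < k) : v = 0 := by
  refine (isPrimitive_of_apply_eq_self hsum horth hLdeg hH hv hΛ).eq_zero_of_pow_apply_eq_zero sl
    (by omega) (N := n + 1) ?_
  refine eq_zero_of_apply_eq_self_of_notMem hsum horth (apply_pow_apply_eq_self hLdeg hv _) ?_
  simp only [mem_Icc, nsmul_eq_mul]
  push_cast
  omega

theorem count_pow_apply_of_apply_eq_self [IsAddTorsionFree V] {R : Module.End K V}
    (hsum : ∑ k ∈ Icc (0 : ℤ) (2 * n), Prj k = 1)
    (horth : ∀ j k : ℤ, j ≠ k → Prj j * Prj k = 0) (hLdeg : ∀ k : ℤ, L * Prj k = Prj (k + 2) * L)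
    (hH : H = ∑ k ∈ Icc (0 : ℤ) (2 * n), ((n : ℤ) - k) • Prj k) (sl : Λ * L - L * Λ = H)
    (hR : ∀ (r s : ℕ), s ≤ n → ∀ B : V, Prj s B = B → Λ B = 0 →
      R ((L ^ r) B) = (r : ℤ) • (L ^ r) B)
    (hv : Prj k v = v) (hΛ : Λ v = 0) (m : ℕ) : R ((L ^ m) v) = (m : ℤ) • (L ^ m) v := by
  obtain hk | hk := lt_or_ge k 0
  · rw [eq_zero_of_apply_eq_self_of_notMem hsum horth hv (by simp [hk])]
    simp
  obtain hkn | hkn := lt_or_ge (n : ℤ) k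
  · rw [eq_zero_of_apply_eq_self_of_lt hsum horth hLdeg hH sl hv hΛ hkn]
    simp
  lift k to ℕ using hk
  exact hR m k (by omega) v hv hΛ

end LefschetzGrading

section LefschetzComponents

variable {K V : Type*} [CommRing K] [AddCommGroup V] [Module K V]
  {L Λ H R d : Module.End K V} {μ : ℤ} {B P Q : V}

theorem dLambda_pow_apply (sl : Λ * L - L * Λ = H) (hB : IsPrimitive L Λ H μ B)
    (hP : IsPrimitive L Λ H (μ - 1) P) (hQ : IsPrimitive L Λ H (μ + 1) Q)
    (hd : ∀ m : ℕ, d ((L ^ m) B) = (L ^ m) P + (L ^ (m + 1)) Q) (r : ℕ) :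
    (d * Λ - Λ * d) ((L ^ r) B) = (r : ℤ) • (L ^ (r - 1)) P - (μ - r + 1) • (L ^ r) Q := by
  rcases r with _ | m
  · have hd₀ : d B = P + L Q := by simpa using hd 0
    have hΛLQ : Λ (L Q) = (μ + 1) • Q := by simpa using hQ.lambda_pow_succ_apply sl 0
    simp [hB.lambda_eq_zero, hd₀, hP.lambda_eq_zero, hΛLQ]
  · rw [LinearMap.sub_apply, Module.End.mul_apply, Module.End.mul_apply,
      hB.lambda_pow_succ_apply sl, map_zsmul, hd, hd, map_add, hP.lambda_pow_succ_apply sl,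
      hQ.lambda_pow_succ_apply sl, Nat.add_sub_cancel]
    push_cast
    module

theorem dPlus_identity (sl : Λ * L - L * Λ = H) (hB : IsPrimitive L Λ H μ B)
    (hP : IsPrimitive L Λ H (μ - 1) P) (hQ : IsPrimitive L Λ H (μ + 1) Q)
    (hRP : ∀ m : ℕ, R ((L ^ m) P) = (m : ℤ) • (L ^ m) P)
    (hRQ : ∀ m : ℕ, R ((L ^ m) Q) = (m : ℤ) • (L ^ m) Q)
    (hd : ∀ m : ℕ, d ((L ^ m) B) = (L ^ m) P + (L ^ (m + 1)) Q) (r : ℕ) :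
    (H + (2 : ℤ) • R + 1) ((L ^ r) P) = ((H + R + 1) * d + L * (d * Λ - Λ * d)) ((L ^ r) B) := by
  have hL : ∀ (m : ℕ) (x : V), L ((L ^ m) x) = (L ^ (m + 1)) x := fun m x => by
    rw [pow_succ', Module.End.mul_apply]
  rcases r with _ | m
  all_goals
    simp only [LinearMap.add_apply, Module.End.mul_apply, LinearMap.smul_apply,
      Module.End.one_apply, hd, dLambda_pow_apply sl hB hP hQ hd, map_add, map_sub, map_zsmul,
      hL, hP.h_pow_apply, hQ.h_pow_apply, hRP, hRQ, Nat.add_sub_cancel]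
    push_cast
    module

theorem dMinus_identity (sl : Λ * L - L * Λ = H) (hB : IsPrimitive L Λ H μ B)
    (hP : IsPrimitive L Λ H (μ - 1) P) (hQ : IsPrimitive L Λ H (μ + 1) Q)
    (hRP : ∀ m : ℕ, R ((L ^ m) P) = (m : ℤ) • (L ^ m) P)
    (hRQ : ∀ m : ℕ, R ((L ^ m) Q) = (m : ℤ) • (L ^ m) Q)
    (hd : ∀ m : ℕ, d ((L ^ m) B) = (L ^ m) P + (L ^ (m + 1)) Q) (r : ℕ) :
    ((H + (2 : ℤ) • R + 1) * (H + R)) ((L ^ r) Q)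
      = (Λ * d - (H + R) * (d * Λ - Λ * d)) ((L ^ r) B) := by
  rcases r with _ | m
  all_goals
    simp only [LinearMap.add_apply, LinearMap.sub_apply, Module.End.mul_apply,
      LinearMap.smul_apply, Module.End.one_apply, hd, dLambda_pow_apply sl hB hP hQ hd, map_add,
      map_sub, map_zsmul, hP.h_pow_apply, hQ.h_pow_apply, hRP, hRQ,
      hP.lambda_pow_apply sl, hQ.lambda_pow_apply sl, Nat.add_sub_cancel]
    push_cast
    module

end LefschetzComponents

/-- `V` models the forms on `M^{2n}`, `Prj k` being the projection onto `k`-forms, and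
`Dp = ∂₊`, `Dm = ∂₋`. The inverses of `H+2R+1` and `(H+2R+1)(H+R)` are cleared: both identities
are stated multiplied out, on every `L^r B` with `B` primitive of degree `s ≤ n`. -/
theorem dplus_dminus_via_d_and_dLambda_general
    (n : ℕ) (V : Type*) [AddCommGroup V] [Module ℝ V]
    (Prj : ℤ → Module.End ℝ V)
    (hsum : ∑ k ∈ Finset.Icc (0 : ℤ) (2 * n), Prj k = 1)
    (horth : ∀ j k : ℤ, j ≠ k → Prj j * Prj k = 0)
    (L Λ H : Module.End ℝ V)
    (hLdeg : ∀ k : ℤ, L * Prj k = Prj (k + 2) * L)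
    (hH : H = ∑ k ∈ Finset.Icc (0 : ℤ) (2 * n), ((n : ℤ) - k) • Prj k)
    (sl₁ : Λ * L - L * Λ = H)
    (d : Module.End ℝ V)
    (Dp Dm R : Module.End ℝ V)
    (hDpDm : ∀ (r s : ℕ), s ≤ n → ∀ B : V, Prj s B = B → Λ B = 0 →
      (Prj ((s : ℤ) + 1) (Dp B) = Dp B ∧ Λ (Dp B) = 0) ∧
      (Prj ((s : ℤ) - 1) (Dm B) = Dm B ∧ Λ (Dm B) = 0) ∧
      Dp ((L ^ r) B) = (L ^ r) (Dp B) ∧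
      Dm ((L ^ r) B) = (L ^ r) (Dm B) ∧
      d ((L ^ r) B) = (L ^ r) (Dp B) + (L ^ (r + 1)) (Dm B))
    (hR : ∀ (r s : ℕ), s ≤ n → ∀ B : V, Prj s B = B → Λ B = 0 →
      R ((L ^ r) B) = (r : ℤ) • (L ^ r) B)
    (dΛ : Module.End ℝ V)
    (hdΛ : dΛ = d * Λ - Λ * d) :
    ∀ (r s : ℕ), s ≤ n → ∀ B : V, Prj s B = B → Λ B = 0 →
      ((H + (2 : ℤ) • R + 1) * Dp) ((L ^ r) B)
          = ((H + R + 1) * d + L * dΛ) ((L ^ r) B) ∧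
      (((H + (2 : ℤ) • R + 1) * (H + R)) * Dm) ((L ^ r) B)
          = (Λ * d - (H + R) * dΛ) ((L ^ r) B) := by
  intro r s hs B hB hΛB
  have := IsAddTorsionFree.of_isTorsionFree ℝ V
  obtain ⟨⟨hPdeg, hPΛ⟩, ⟨hQdeg, hQΛ⟩, -, -, -⟩ := hDpDm 0 s hs B hB hΛB
  have hBprim : IsPrimitive L Λ H (n - s) B :=
    isPrimitive_of_apply_eq_self hsum horth hLdeg hH hB hΛB
  have hPprim : IsPrimitive L Λ H (n - s - 1) (Dp B) := by
    simpa only [sub_sub] using isPrimitive_of_apply_eq_self hsum horth hLdeg hH hPdeg hPΛ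
  have hQprim : IsPrimitive L Λ H (n - s + 1) (Dm B) := by
    simpa only [sub_sub_eq_add_sub, add_sub_right_comm]
      using isPrimitive_of_apply_eq_self hsum horth hLdeg hH hQdeg hQΛ
  have hRP := count_pow_apply_of_apply_eq_self hsum horth hLdeg hH sl₁ hR hPdeg hPΛ
  have hRQ := count_pow_apply_of_apply_eq_self hsum horth hLdeg hH sl₁ hR hQdeg hQΛ
  have hd (m : ℕ) := (hDpDm m s hs B hB hΛB).2.2.2.2
  obtain ⟨-, -, hDp, hDm, -⟩ := hDpDm r s hs B hB hΛB
  rw [Module.End.mul_apply, hDp, Module.End.mul_apply (_ * _), hDm, hdΛ]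
  exact ⟨dPlus_identity sl₁ hBprim hPprim hQprim hRP hRQ hd r,
    dMinus_identity sl₁ hBprim hPprim hQprim hRP hRQ hd r⟩

/-- **`∂₊` and `∂₋` in terms of `d` and `d^Λ`.**  `V` models the differential forms of a
symplectic manifold `(M^{2n}, ω)`: `Prj k` is the projection onto `k`-forms, `(L, Λ, H)`
the `sl(2)`-triple, `d` the exterior derivative (degree `+1`, commuting with `L`), and
`d^Λ = dΛ - Λd`.  `Dp = ∂₊`, `Dm = ∂₋` are the Lefschetz components of `d`
(`d(L^r B) = L^r ∂₊B + L^{r+1} ∂₋B` with `∂₊B, ∂₋B` primitive), and `R` counts the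
`L`-power.  Since `H + R` and `H + 2R + 1` are invertible on the relevant degrees, the
identities `∂₊ = (H+2R+1)⁻¹ [(H+R+1) d + L d^Λ]` and
`∂₋ = [(H+2R+1)(H+R)]⁻¹ [Λ d - (H+R) d^Λ]` are stated equivalently as
`(H+2R+1) ∂₊ = (H+R+1) d + L d^Λ` and `(H+2R+1)(H+R) ∂₋ = Λ d - (H+R) d^Λ`
on every `L^{r,s}`. -/
theorem dplus_dminus_via_d_and_dLambda
    (n : ℕ) (V : Type*) [AddCommGroup V] [Module ℝ V]
    (Prj : ℤ → Module.End ℝ V)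
    (hsum : ∑ k ∈ Finset.Icc (0 : ℤ) (2 * n), Prj k = 1)
    (horth : ∀ j k : ℤ, j ≠ k → Prj j * Prj k = 0)
    (hidem : ∀ k : ℤ, Prj k * Prj k = Prj k)
    (L Λ H : Module.End ℝ V)
    (hLdeg : ∀ k : ℤ, L * Prj k = Prj (k + 2) * L)
    (hΛdeg : ∀ k : ℤ, Λ * Prj k = Prj (k - 2) * Λ)
    (hH : H = ∑ k ∈ Finset.Icc (0 : ℤ) (2 * n), ((n : ℤ) - k) • Prj k)
    (sl₁ : Λ * L - L * Λ = H)
    (sl₂ : H * Λ - Λ * H = (2 : ℤ) • Λ)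
    (sl₃ : H * L - L * H = (-2 : ℤ) • L)
    (d : Module.End ℝ V)
    (hddeg : ∀ k : ℤ, d * Prj k = Prj (k + 1) * d)
    (hdL : d * L = L * d)
    (Dp Dm R : Module.End ℝ V)
    (hDpDm : ∀ (r s : ℕ), s ≤ n → ∀ B : V, Prj s B = B → Λ B = 0 →
      (Prj ((s : ℤ) + 1) (Dp B) = Dp B ∧ Λ (Dp B) = 0) ∧
      (Prj ((s : ℤ) - 1) (Dm B) = Dm B ∧ Λ (Dm B) = 0) ∧
      Dp ((L ^ r) B) = (L ^ r) (Dp B) ∧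
      Dm ((L ^ r) B) = (L ^ r) (Dm B) ∧
      d ((L ^ r) B) = (L ^ r) (Dp B) + (L ^ (r + 1)) (Dm B))
    (hR : ∀ (r s : ℕ), s ≤ n → ∀ B : V, Prj s B = B → Λ B = 0 →
      R ((L ^ r) B) = (r : ℤ) • (L ^ r) B)
    (dΛ : Module.End ℝ V)
    (hdΛ : dΛ = d * Λ - Λ * d) :
    ∀ (r s : ℕ), s ≤ n → ∀ B : V, Prj s B = B → Λ B = 0 →
      ((H + (2 : ℤ) • R + 1) * Dp) ((L ^ r) B)
          = ((H + R + 1) * d + L * dΛ) ((L ^ r) B) ∧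
      (((H + (2 : ℤ) • R + 1) * (H + R)) * Dm) ((L ^ r) B)
          = (Λ * d - (H + R) * dΛ) ((L ^ r) B) :=
  dplus_dminus_via_d_and_dLambda_general n V Prj hsum horth L Λ H hLdeg hH sl₁ d Dp Dm R hDpDm hR dΛ
    hdΛ
end

section
/- The fourth-order operators Δ_{dd^Λ} = d^{Λ*}d*dd^Λ + (1/4)(dd* + d^Λ d^{Λ*})² and Δ_{d+d^Λ} = dd^Λ d^{Λ*}d* + (1/4)(d*d + d^{Λ*}d^Λ)² are elliptic on differential forms of a symplectic manifold with compatible triple: their principal symbols at any nonzero unit covector ξ act invertibly, specifically σ(Δ_{dd^Λ})(ξ)η = w_1∧β_1 + w_2∧β_2 + (1/4)w_{12}∧β_3 + (1/4)β_4 for the decomposition η = w_1∧β_1 + w_2∧β_2 + w_{12}∧β_3 + β_4. -/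
open Finset

lemma fourth_aux (V : Type*) [AddCommGroup V] [Module ℝ V]
    (A0 A1 B0 B1 : Module.End ℝ V)
    (rA00 : ∀ x, A0 (A0 x) = 0) (rA11 : ∀ x, A1 (A1 x) = 0)
    (rA10 : ∀ x, A1 (A0 x) = - A0 (A1 x))
    (rB0A0 : ∀ x, B0 (A0 x) = x - A0 (B0 x))
    (rB1A1 : ∀ x, B1 (A1 x) = x - A1 (B1 x))
    (rB0A1 : ∀ x, B0 (A1 x) = - A1 (B0 x))
    (rB1A0 : ∀ x, B1 (A0 x) = - A0 (B1 x))
    (β₁ β₂ β₃ β₄ : V)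
    (h₁₀ : B0 β₁ = 0) (h₁₁ : B1 β₁ = 0) (h₂₀ : B0 β₂ = 0) (h₂₁ : B1 β₂ = 0)
    (h₃₀ : B0 β₃ = 0) (h₃₁ : B1 β₃ = 0) (h₄₀ : B0 β₄ = 0) (h₄₁ : B1 β₄ = 0) :
    (A1 * B0 * A0 * B1 + (1 / 4 : ℝ) • ((A0*B0 + B1*A1)*(A0*B0+B1*A1)))
        (A0 β₁ + A1 β₂ + A0 (A1 β₃) + β₄)
      = A0 β₁ + A1 β₂ + (1 / 4 : ℝ) • (A0 (A1 β₃)) + (1 / 4 : ℝ) • β₄ ∧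
    (A0 * B1 * A1 * B0 + (1 / 4 : ℝ) • ((B0*A0 + A1*B1)*(B0*A0+A1*B1)))
        (A0 β₁ + A1 β₂ + A0 (A1 β₃) + β₄)
      = A0 β₁ + A1 β₂ + (1 / 4 : ℝ) • (A0 (A1 β₃)) + (1 / 4 : ℝ) • β₄ := by
  constructor <;>
  · simp only [Module.End.mul_apply, LinearMap.add_apply, LinearMap.smul_apply,
      map_add, map_sub, map_neg, map_smul, map_zero,
      rB0A0, rB1A1, rB0A1, rB1A0, rA10, rA00, rA11,
      h₁₀, h₁₁, h₂₀, h₂₁, h₃₀, h₃₁, h₄₀, h₄₁,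
      neg_zero, sub_zero, zero_sub, add_zero, zero_add, neg_neg, smul_zero]
    module

lemma fourth_bij (V : Type*) [AddCommGroup V] [Module ℝ V]
    (S : Module.End ℝ V) (hS : ∀ x, (5:ℝ) • S x - (4:ℝ) • S (S x) = x) :
    Function.Bijective ⇑S := by
  constructor
  · intro x y hxy
    rw [← hS x, ← hS y, hxy]
  · intro y
    refine ⟨(5:ℝ) • y - (4:ℝ) • S y, ?_⟩
    rw [map_sub, map_smul, map_smul]
    exact hS y

/-- **Ellipticity of the fourth-order operators `Δ_{dd^Λ}` and `Δ_{d+d^Λ}`.**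
Pointwise frame model at a point of a symplectic manifold `(M^{2n}, ω)` with compatible
triple: `V` is the exterior algebra of the cotangent space, `a i` is exterior
multiplication by the orthonormal coframe element `w_{i+1}` (with `w_1 = ξ` the chosen
nonzero unit covector and `ω = ∑ w_{2i-1}∧w_{2i}`) and `bop i` the interior product
with the dual frame; every form decomposes uniquely as
`η = w_1∧β_1 + w_2∧β_2 + w_{12}∧β_3 + β_4` with the `β_i` containing neither `w_1` nor
`w_2`.  The principal symbols at `ξ` are `σ(d) = w_1∧·`, `σ(d*) = -i_{e_1}`,
`σ(d^Λ) = -i_{e_2}`, `σ(d^{Λ*}) = w_2∧·`.  Then the principal symbols of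
`Δ_{dd^Λ} = d^{Λ*}d*dd^Λ + ¼(dd* + d^Λd^{Λ*})²` and
`Δ_{d+d^Λ} = dd^Λd^{Λ*}d* + ¼(d*d + d^{Λ*}d^Λ)²` act invertibly, and explicitly
`σ(Δ_{dd^Λ})(ξ) η = w_1∧β_1 + w_2∧β_2 + ¼ w_{12}∧β_3 + ¼ β_4`. -/
theorem fourth_order_laplacians_elliptic
    (n : ℕ) (hn : 0 < n) (V : Type*) [AddCommGroup V] [Module ℝ V]
    (a bop : Fin (2 * n) → Module.End ℝ V)
    (haa : ∀ i j, a i * a j + a j * a i = 0)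
    (hbb : ∀ i j, bop i * bop j + bop j * bop i = 0)
    (hba : ∀ i j, bop i * a j + a j * bop i = (if i = j then (1 : ℝ) else 0) • 1)
    (hdecomp : ∀ η : V, ∃ β₁ β₂ β₃ β₄ : V,
      ((bop ⟨0, by omega⟩) β₁ = 0 ∧ (bop ⟨1, by omega⟩) β₁ = 0) ∧
      ((bop ⟨0, by omega⟩) β₂ = 0 ∧ (bop ⟨1, by omega⟩) β₂ = 0) ∧
      ((bop ⟨0, by omega⟩) β₃ = 0 ∧ (bop ⟨1, by omega⟩) β₃ = 0) ∧
      ((bop ⟨0, by omega⟩) β₄ = 0 ∧ (bop ⟨1, by omega⟩) β₄ = 0) ∧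
      η = (a ⟨0, by omega⟩) β₁ + (a ⟨1, by omega⟩) β₂
        + (a ⟨0, by omega⟩) ((a ⟨1, by omega⟩) β₃) + β₄)
    (σd σdstar σdΛ σdΛstar S₁ S₂ : Module.End ℝ V)
    (hσd : σd = a ⟨0, by omega⟩)
    (hσdstar : σdstar = -(bop ⟨0, by omega⟩))
    (hσdΛ : σdΛ = -(bop ⟨1, by omega⟩))
    (hσdΛstar : σdΛstar = a ⟨1, by omega⟩)
    (hS₁ : S₁ = σdΛstar * σdstar * σd * σdΛ
      + (1 / 4 : ℝ) • ((σd * σdstar + σdΛ * σdΛstar) * (σd * σdstar + σdΛ * σdΛstar)))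
    (hS₂ : S₂ = σd * σdΛ * σdΛstar * σdstar
      + (1 / 4 : ℝ) • ((σdstar * σd + σdΛstar * σdΛ) * (σdstar * σd + σdΛstar * σdΛ))) :
    Function.Bijective ⇑S₁ ∧ Function.Bijective ⇑S₂ ∧
    (∀ β₁ β₂ β₃ β₄ : V,
      ((bop ⟨0, by omega⟩) β₁ = 0 ∧ (bop ⟨1, by omega⟩) β₁ = 0) →
      ((bop ⟨0, by omega⟩) β₂ = 0 ∧ (bop ⟨1, by omega⟩) β₂ = 0) →
      ((bop ⟨0, by omega⟩) β₃ = 0 ∧ (bop ⟨1, by omega⟩) β₃ = 0) →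
      ((bop ⟨0, by omega⟩) β₄ = 0 ∧ (bop ⟨1, by omega⟩) β₄ = 0) →
      S₁ ((a ⟨0, by omega⟩) β₁ + (a ⟨1, by omega⟩) β₂
          + (a ⟨0, by omega⟩) ((a ⟨1, by omega⟩) β₃) + β₄)
        = (a ⟨0, by omega⟩) β₁ + (a ⟨1, by omega⟩) β₂
          + (1 / 4 : ℝ) • ((a ⟨0, by omega⟩) ((a ⟨1, by omega⟩) β₃))
          + (1 / 4 : ℝ) • β₄) := by
  have h0 : (0 : ℕ) < 2 * n := by omega
  have h1 : (1 : ℕ) < 2 * n := by omega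
  let i0 : Fin (2 * n) := ⟨0, h0⟩
  let i1 : Fin (2 * n) := ⟨1, h1⟩
  let A0 : Module.End ℝ V := a i0
  let A1 : Module.End ℝ V := a i1
  let B0 : Module.End ℝ V := bop i0
  let B1 : Module.End ℝ V := bop i1
  have hne : i0 ≠ i1 := by simp [i0, i1, Fin.ext_iff]
  have half : ∀ y : V, y + y = 0 → y = 0 := by
    intro y h
    have h2 : (2:ℝ) • y = 0 := by rw [two_smul]; exact h
    have h3 := congrArg (fun z : V => (1/2:ℝ) • z) h2
    simpa [smul_smul] using h3
  have rA00 : ∀ x, A0 (A0 x) = 0 := by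
    intro x
    have h := LinearMap.congr_fun (haa i0 i0) x
    simp only [Module.End.mul_apply, LinearMap.add_apply, LinearMap.zero_apply] at h
    exact half _ h
  have rA11 : ∀ x, A1 (A1 x) = 0 := by
    intro x
    have h := LinearMap.congr_fun (haa i1 i1) x
    simp only [Module.End.mul_apply, LinearMap.add_apply, LinearMap.zero_apply] at h
    exact half _ h
  have rA10 : ∀ x, A1 (A0 x) = - A0 (A1 x) := by
    intro x
    have h := LinearMap.congr_fun (haa i1 i0) x
    simp only [Module.End.mul_apply, LinearMap.add_apply, LinearMap.zero_apply] at h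
    exact eq_neg_of_add_eq_zero_left h
  have rB0A0 : ∀ x, B0 (A0 x) = x - A0 (B0 x) := by
    intro x
    have h := LinearMap.congr_fun (hba i0 i0) x
    simp only [Module.End.mul_apply, LinearMap.add_apply, LinearMap.smul_apply,
      Module.End.one_apply, if_true, eq_self_iff_true, one_smul] at h
    exact eq_sub_of_add_eq h
  have rB1A1 : ∀ x, B1 (A1 x) = x - A1 (B1 x) := by
    intro x
    have h := LinearMap.congr_fun (hba i1 i1) x
    simp only [Module.End.mul_apply, LinearMap.add_apply, LinearMap.smul_apply,
      Module.End.one_apply, if_true, eq_self_iff_true, one_smul] at h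
    exact eq_sub_of_add_eq h
  have rB0A1 : ∀ x, B0 (A1 x) = - A1 (B0 x) := by
    intro x
    have h := LinearMap.congr_fun (hba i0 i1) x
    simp only [Module.End.mul_apply, LinearMap.add_apply, LinearMap.smul_apply,
      if_neg hne, zero_smul, LinearMap.zero_apply] at h
    exact eq_neg_of_add_eq_zero_left h
  have rB1A0 : ∀ x, B1 (A0 x) = - A0 (B1 x) := by
    intro x
    have h := LinearMap.congr_fun (hba i1 i0) x
    simp only [Module.End.mul_apply, LinearMap.add_apply, LinearMap.smul_apply,
      if_neg hne.symm, zero_smul, LinearMap.zero_apply] at h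
    exact eq_neg_of_add_eq_zero_left h
  -- normal forms of the symbols
  have hσd' : σd = A0 := hσd
  have hσdstar' : σdstar = -B0 := hσdstar
  have hσdΛ' : σdΛ = -B1 := hσdΛ
  have hσdΛstar' : σdΛstar = A1 := hσdΛstar
  have hS₁' : S₁ = A1 * B0 * A0 * B1
      + (1 / 4 : ℝ) • ((A0*B0 + B1*A1)*(A0*B0+B1*A1)) := by
    rw [hS₁, hσd', hσdstar', hσdΛ', hσdΛstar']
    have h : A0 * -B0 + -B1 * A1 = -(A0*B0 + B1*A1) := by
      rw [mul_neg, neg_mul, neg_add]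
    rw [h, neg_mul_neg]
    congr 1
    simp only [mul_neg, neg_mul, neg_neg]
  have hS₂' : S₂ = A0 * B1 * A1 * B0
      + (1 / 4 : ℝ) • ((B0*A0 + A1*B1)*(B0*A0+A1*B1)) := by
    rw [hS₂, hσd', hσdstar', hσdΛ', hσdΛstar']
    have h : -B0 * A0 + A1 * -B1 = -(B0*A0 + A1*B1) := by
      rw [mul_neg, neg_mul, neg_add]
    rw [h, neg_mul_neg]
    congr 1
    simp only [mul_neg, neg_mul, neg_neg]
  -- key action lemmas
  have hkey₁ : ∀ β₁ β₂ β₃ β₄ : V,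
      B0 β₁ = 0 → B1 β₁ = 0 → B0 β₂ = 0 → B1 β₂ = 0 →
      B0 β₃ = 0 → B1 β₃ = 0 → B0 β₄ = 0 → B1 β₄ = 0 →
      S₁ (A0 β₁ + A1 β₂ + A0 (A1 β₃) + β₄)
        = A0 β₁ + A1 β₂ + (1 / 4 : ℝ) • (A0 (A1 β₃)) + (1 / 4 : ℝ) • β₄ := by
    intro β₁ β₂ β₃ β₄ c10 c11 c20 c21 c30 c31 c40 c41
    rw [hS₁']
    exact (fourth_aux V A0 A1 B0 B1 rA00 rA11 rA10 rB0A0 rB1A1 rB0A1 rB1A0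
      β₁ β₂ β₃ β₄ c10 c11 c20 c21 c30 c31 c40 c41).1
  have hkey₂ : ∀ β₁ β₂ β₃ β₄ : V,
      B0 β₁ = 0 → B1 β₁ = 0 → B0 β₂ = 0 → B1 β₂ = 0 →
      B0 β₃ = 0 → B1 β₃ = 0 → B0 β₄ = 0 → B1 β₄ = 0 →
      S₂ (A0 β₁ + A1 β₂ + A0 (A1 β₃) + β₄)
        = A0 β₁ + A1 β₂ + (1 / 4 : ℝ) • (A0 (A1 β₃)) + (1 / 4 : ℝ) • β₄ := by
    intro β₁ β₂ β₃ β₄ c10 c11 c20 c21 c30 c31 c40 c41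
    rw [hS₂']
    exact (fourth_aux V A0 A1 B0 B1 rA00 rA11 rA10 rB0A0 rB1A1 rB0A1 rB1A0
      β₁ β₂ β₃ β₄ c10 c11 c20 c21 c30 c31 c40 c41).2
  -- the quadratic inverse identity, for any S acting diagonally like hkey
  have hinv : ∀ S : Module.End ℝ V,
      (∀ β₁ β₂ β₃ β₄ : V,
        B0 β₁ = 0 → B1 β₁ = 0 → B0 β₂ = 0 → B1 β₂ = 0 →
        B0 β₃ = 0 → B1 β₃ = 0 → B0 β₄ = 0 → B1 β₄ = 0 →
        S (A0 β₁ + A1 β₂ + A0 (A1 β₃) + β₄)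
          = A0 β₁ + A1 β₂ + (1 / 4 : ℝ) • (A0 (A1 β₃)) + (1 / 4 : ℝ) • β₄) →
      ∀ x, (5:ℝ) • S x - (4:ℝ) • S (S x) = x := by
    intro S hkey x
    obtain ⟨β₁, β₂, β₃, β₄, ⟨c10, c11⟩, ⟨c20, c21⟩, ⟨c30, c31⟩, ⟨c40, c41⟩, hx⟩ :=
      hdecomp x
    have c10' : B0 β₁ = 0 := c10
    have c11' : B1 β₁ = 0 := c11
    have c20' : B0 β₂ = 0 := c20
    have c21' : B1 β₂ = 0 := c21
    have c30' : B0 β₃ = 0 := c30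
    have c31' : B1 β₃ = 0 := c31
    have c40' : B0 β₄ = 0 := c40
    have c41' : B1 β₄ = 0 := c41
    have hx' : x = A0 β₁ + A1 β₂ + A0 (A1 β₃) + β₄ := hx
    have d30 : B0 ((1/4:ℝ) • β₃) = 0 := by rw [map_smul, c30', smul_zero]
    have d31 : B1 ((1/4:ℝ) • β₃) = 0 := by rw [map_smul, c31', smul_zero]
    have d40 : B0 ((1/4:ℝ) • β₄) = 0 := by rw [map_smul, c40', smul_zero]
    have d41 : B1 ((1/4:ℝ) • β₄) = 0 := by rw [map_smul, c41', smul_zero]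
    have e1 := hkey β₁ β₂ β₃ β₄ c10' c11' c20' c21' c30' c31' c40' c41'
    have e2 := hkey β₁ β₂ ((1/4:ℝ) • β₃) ((1/4:ℝ) • β₄)
      c10' c11' c20' c21' d30 d31 d40 d41
    have harg : A0 β₁ + A1 β₂ + (1 / 4 : ℝ) • (A0 (A1 β₃)) + (1 / 4 : ℝ) • β₄
        = A0 β₁ + A1 β₂ + A0 (A1 ((1/4:ℝ) • β₃)) + ((1/4:ℝ) • β₄) := by
      rw [map_smul, map_smul]
    rw [hx', e1, harg, e2]
    simp only [map_smul, smul_smul]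
    module
  refine ⟨fourth_bij V S₁ (hinv S₁ hkey₁), fourth_bij V S₂ (hinv S₂ hkey₂), ?_⟩
  intro β₁ β₂ β₃ β₄ ⟨c10, c11⟩ ⟨c20, c21⟩ ⟨c30, c31⟩ ⟨c40, c41⟩
  exact hkey₁ β₁ β₂ β₃ β₄ c10 c11 c20 c21 c30 c31 c40 c41
end
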